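/- There exists a constant C > 0 such that for every integer d ≥ 2 and every τ > 0, ∫_0^∞ |∫_0^{min(x,τ)} ((e^{t²/4} − 1)/t) · sin(t√d) dt| · φ(x) dx ≤ C/√d. -/

import Mathlib

/-!
Integrate the inner integral by parts against the antiderivative `(1 - cos (c t)) / c` of
`sin (t c)`, which lies in `[0, 2 / c]`. Since `u` increases from `u 0 = 0`, both resulting terms
lie in `[0, 2 u(m) / c]`, so for `c = √d` and `m = min x τ ≤ x` the inner integral is at most
`2 u(x) / √d ≤ x e^{x²/4} / (2 √d)`. Against `φ` the factor `e^{x²/4}` leaves `x e^{-x²/4}`, whose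
integral over `(0, ∞)` is `2`; hence `C = 1` works.
-/

open MeasureTheory ProbabilityTheory Real

/-- The standard Gaussian density on `ℝ`. -/
noncomputable def gaussDensity (x : ℝ) : ℝ := Real.exp (-x ^ 2 / 2) / Real.sqrt (2 * π)

open Set intervalIntegral

lemma exp_sub_one_le_mul_exp (s : ℝ) : exp s - 1 ≤ s * exp s := by
  have h := mul_le_mul_of_nonneg_right (one_sub_le_exp_neg s) (exp_pos s).le
  rw [← exp_add, neg_add_cancel, exp_zero] at h
  linarith

-- The function `u`; division by zero gives `expSqSlope 0 = 0`, its continuous extension.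
noncomputable def expSqSlope (t : ℝ) : ℝ := (exp (t ^ 2 / 4) - 1) / t

noncomputable def expSqSlopeDeriv (t : ℝ) : ℝ :=
  (t ^ 2 / 2 * exp (t ^ 2 / 4) - (exp (t ^ 2 / 4) - 1)) / t ^ 2

lemma hasDerivAt_sq_div_four (t : ℝ) : HasDerivAt (fun t => t ^ 2 / 4) (t / 2) t :=
  ((hasDerivAt_pow 2 t).div_const 4).congr_deriv (by ring)

lemma hasDerivAt_exp_sq_div_four (t : ℝ) :
    HasDerivAt (fun t => exp (t ^ 2 / 4)) (exp (t ^ 2 / 4) * (t / 2)) t :=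
  (hasDerivAt_exp _).comp t (hasDerivAt_sq_div_four t)

lemma expSqSlope_eq_dslope : expSqSlope = dslope (fun t => exp (t ^ 2 / 4)) 0 := by
  ext t
  rcases eq_or_ne t 0 with rfl | ht
  · simp [dslope_same, (hasDerivAt_exp_sq_div_four 0).deriv, expSqSlope]
  · rw [dslope_of_ne _ ht, slope_def_field]
    simp [expSqSlope]

lemma continuous_expSqSlope : Continuous expSqSlope := by
  rw [expSqSlope_eq_dslope, ← continuousOn_univ, continuousOn_dslope Filter.univ_mem]
  exact ⟨by fun_prop, by fun_prop⟩

lemma hasDerivAt_expSqSlope {t : ℝ} (ht : t ≠ 0) :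
    HasDerivAt expSqSlope (expSqSlopeDeriv t) t := by
  refine ((hasDerivAt_exp_sq_div_four t).sub_const 1 |>.div (hasDerivAt_id' t) ht).congr_deriv ?_
  simp only [expSqSlopeDeriv]
  field_simp

lemma expSqSlopeDeriv_nonneg (t : ℝ) : 0 ≤ expSqSlopeDeriv t := by
  have h := exp_sub_one_le_mul_exp (t ^ 2 / 4)
  have : t ^ 2 / 4 * exp (t ^ 2 / 4) ≤ t ^ 2 / 2 * exp (t ^ 2 / 4) := by
    gcongr; linarith [sq_nonneg t]
  exact div_nonneg (by linarith) (sq_nonneg t)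

lemma expSqSlope_le {x : ℝ} (hx : 0 ≤ x) : expSqSlope x ≤ x / 4 * exp (x ^ 2 / 4) := by
  rcases hx.eq_or_lt with rfl | hx
  · simp [expSqSlope]
  rw [expSqSlope, div_le_iff₀ hx]
  nlinarith [exp_sub_one_le_mul_exp (x ^ 2 / 4)]

lemma hasDerivAt_one_sub_cos_mul_div {c : ℝ} (hc : c ≠ 0) (t : ℝ) :
    HasDerivAt (fun t => (1 - cos (c * t)) / c) (sin (t * c)) t := by
  refine ((((hasDerivAt_id' t).const_mul c).cos.const_sub 1).div_const c).congr_deriv ?_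
  rw [mul_comm t c]
  field_simp

lemma one_sub_cos_mul_div_nonneg {c : ℝ} (hc : 0 < c) (t : ℝ) : 0 ≤ (1 - cos (c * t)) / c :=
  div_nonneg (by linarith [cos_le_one (c * t)]) hc.le

lemma one_sub_cos_mul_div_le {c : ℝ} (hc : 0 < c) (t : ℝ) : (1 - cos (c * t)) / c ≤ 2 / c :=
  div_le_div_of_nonneg_right (by linarith [neg_one_le_cos (c * t)]) hc.le

theorem abs_integral_mul_sin_le {f f' : ℝ → ℝ} {m c : ℝ} (hm : 0 ≤ m) (hc : 0 < c)
    (hf : ContinuousOn f (Icc 0 m)) (hf0 : f 0 = 0)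
    (hderiv : ∀ t ∈ Ioo 0 m, HasDerivAt f (f' t) t) (hf' : ∀ t ∈ Ioo 0 m, 0 ≤ f' t) :
    |∫ t in (0 : ℝ)..m, f t * sin (t * c)| ≤ 2 * f m / c := by
  set v : ℝ → ℝ := fun t => (1 - cos (c * t)) / c
  have hv : ∀ t, HasDerivAt v (sin (t * c)) t := hasDerivAt_one_sub_cos_mul_div hc.ne'
  have hv_nonneg : ∀ t, 0 ≤ v t := one_sub_cos_mul_div_nonneg hc
  have hv_le : ∀ t, v t ≤ 2 / c := one_sub_cos_mul_div_le hc
  have hIcc : uIcc 0 m = Icc 0 m := uIcc_of_le hm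
  have hIoo : Ioo (min 0 m) (max 0 m) = Ioo 0 m := by rw [min_eq_left hm, max_eq_right hm]
  have hf'_int : IntervalIntegrable f' volume 0 m :=
    intervalIntegrable_deriv_of_nonneg (hIcc ▸ hf) (hIoo ▸ hderiv) (hIoo ▸ hf')
  have hftc : ∫ t in (0 : ℝ)..m, f' t = f m := by
    rw [integral_eq_sub_of_hasDerivAt_of_le hm hf hderiv hf'_int, hf0, sub_zero]
  have hf'v_int : IntervalIntegrable (fun t => f' t * v t) volume 0 m :=
    hf'_int.mul_continuousOn (fun t _ => (hv t).continuousAt.continuousWithinAt)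
  have hfm : 0 ≤ f m := by
    simpa [hftc] using integral_mono_on_of_le_Ioo hm intervalIntegrable_const hf'_int hf'
  have hIBP : ∫ t in (0 : ℝ)..m, f t * sin (t * c)
      = f m * v m - ∫ t in (0 : ℝ)..m, f' t * v t := by
    rw [integral_mul_deriv_eq_deriv_mul_of_hasDerivAt (hIcc ▸ hf)
      (fun t _ => (hv t).continuousAt.continuousWithinAt) (hIoo ▸ hderiv) (fun t _ => hv t)
      hf'_int ((by fun_prop : Continuous fun t => sin (t * c)).intervalIntegrable _ _),
      hf0, zero_mul, sub_zero]
  have hbdry : f m * v m ≤ 2 * f m / c := calc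
    _ ≤ f m * (2 / c) := mul_le_mul_of_nonneg_left (hv_le m) hfm
    _ = 2 * f m / c := by ring
  have hrest_nonneg : 0 ≤ ∫ t in (0 : ℝ)..m, f' t * v t := by
    simpa using integral_mono_on_of_le_Ioo hm intervalIntegrable_const hf'v_int
      fun t ht => mul_nonneg (hf' t ht) (hv_nonneg t)
  have hrest_le : ∫ t in (0 : ℝ)..m, f' t * v t ≤ 2 * f m / c := calc
    _ ≤ ∫ t in (0 : ℝ)..m, f' t * (2 / c) :=
      integral_mono_on_of_le_Ioo hm hf'v_int (hf'_int.mul_const _)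
        fun t ht => mul_le_mul_of_nonneg_left (hv_le t) (hf' t ht)
    _ = 2 * f m / c := by rw [intervalIntegral.integral_mul_const, hftc]; ring
  rw [hIBP]
  exact abs_sub_le_of_nonneg_of_le (mul_nonneg hfm (hv_nonneg m)) hbdry hrest_nonneg hrest_le

lemma integral_mul_exp_neg_quarter_mul_sq :
    ∫ x in Ioi (0 : ℝ), x * exp (-(1 / 4) * x ^ 2) = 2 := by
  have h := integral_rpow_mul_exp_neg_mul_rpow (p := 2) (q := 1) (b := 1 / 4) two_pos
    (by norm_num) (by norm_num)
  norm_num [rpow_two] at h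
  simpa only [neg_mul] using h

lemma gaussDensity_nonneg (x : ℝ) : 0 ≤ gaussDensity x := by
  unfold gaussDensity; positivity

lemma abs_integral_expSqSlope_mul_sin_mul_gaussDensity_le {x τ c : ℝ} (hx : 0 < x)
    (hτ : 0 < τ) (hc : 0 < c) :
    |∫ t in (0 : ℝ)..min x τ, expSqSlope t * sin (t * c)| * gaussDensity x
      ≤ x * exp (-(1 / 4) * x ^ 2) / (2 * √(2 * π) * c) := by
  set m := min x τ
  have hm : 0 ≤ m := le_min hx.le hτ.le
  have hmx : m ≤ x := min_le_left x τ
  have hosc := abs_integral_mul_sin_le hm hc continuous_expSqSlope.continuousOn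
    (by simp [expSqSlope]) (fun t ht => hasDerivAt_expSqSlope ht.1.ne')
    (fun t _ => expSqSlopeDeriv_nonneg t)
  calc _ ≤ 2 * expSqSlope m / c * gaussDensity x :=
        mul_le_mul_of_nonneg_right hosc (gaussDensity_nonneg x)
    _ ≤ 2 * (x / 4 * exp (x ^ 2 / 4)) / c * gaussDensity x := by
        gcongr
        · exact gaussDensity_nonneg x
        · exact (expSqSlope_le hm).trans (by gcongr)
    _ = x * (exp (x ^ 2 / 4) * exp (-x ^ 2 / 2)) / (2 * √(2 * π) * c) := by
        unfold gaussDensity; ring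
    _ = x * exp (-(1 / 4) * x ^ 2) / (2 * √(2 * π) * c) := by
        rw [← exp_add]; ring_nf

theorem stmt_16 :
    ∃ C : ℝ, 0 < C ∧ ∀ d : ℕ, 2 ≤ d → ∀ τ : ℝ, 0 < τ →
      ∫ x in Set.Ioi (0 : ℝ),
          |∫ t in (0 : ℝ)..(min x τ),
              ((Real.exp (t ^ 2 / 4) - 1) / t) * Real.sin (t * Real.sqrt d)| * gaussDensity x
        ≤ C / Real.sqrt d := by
  refine ⟨1, one_pos, fun d hd τ hτ => ?_⟩
  have hc : 0 < √(d : ℝ) := sqrt_pos.2 (by positivity)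
  have h2π : 1 ≤ √(2 * π) := one_le_sqrt.2 (by linarith [pi_gt_three])
  calc _ ≤ ∫ x in Ioi (0 : ℝ), x * exp (-(1 / 4) * x ^ 2) / (2 * √(2 * π) * √d) := by
        refine integral_mono_of_nonneg
          (.of_forall fun x => mul_nonneg (abs_nonneg _) (gaussDensity_nonneg x))
          ((integrable_mul_exp_neg_mul_sq (by norm_num)).div_const _).integrableOn ?_
        filter_upwards [ae_restrict_mem measurableSet_Ioi] with x hx
        exact abs_integral_expSqSlope_mul_sin_mul_gaussDensity_le hx hτ hc
    _ = 1 / (√(2 * π) * √d) := by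
        rw [MeasureTheory.integral_div, integral_mul_exp_neg_quarter_mul_sq]; field_simp
    _ ≤ 1 / √d := by gcongr; exact le_mul_of_one_le_left hc.le h2π
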